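/- Fix a positive even integer g. As the prime p tends to infinity, the relative population w_{g,1}(p#) = n_{g,1}(p#) / ∏_{3 ≤ q ≤ p, q prime} (q-2) converges to the asymptotic value W(g) = ∏_{q odd prime, q ∣ g} (q-1)/(q-2). -/

import Mathlib

open Filter
open Finset

/-- The primorial `p#`: the product of all primes `q ≤ p`. -/
def primorial' (p : ℕ) : ℕ := ∏ q ∈ (Finset.range (p + 1)).filter Nat.Prime, q

/-- The population `n_{g,1}(N)` of the gap `g` in the cycle of gaps of `N`: the number
of `x` with `0 ≤ x < N` such that `x` and `x + g` are coprime to `N` and no integer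
strictly between `x` and `x + g` is coprime to `N`. -/
def gapPopulation (g N : ℕ) : ℕ :=
  ((Finset.range N).filter
    (fun x => Nat.Coprime x N ∧ Nat.Coprime (x + g) N ∧
      ∀ y ∈ Finset.Ioo x (x + g), ¬ Nat.Coprime y N)).card

/-- The relative population `w_{g,1}(p#) = n_{g,1}(p#) / ∏_{3 ≤ q ≤ p, q prime} (q-2)`. -/
noncomputable def relPopulation (g p : ℕ) : ℝ :=
  (gapPopulation g (primorial' p) : ℝ)
    / ∏ q ∈ (Finset.Icc 3 p).filter Nat.Prime, ((q : ℝ) - 2)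

/-- The asymptotic relative population of the even gap `g`:
`W(g) = ∏_{q odd prime, q ∣ g} (q-1)/(q-2)`. -/
noncomputable def W (g : ℕ) : ℝ :=
  ∏ q ∈ g.primeFactors.filter (fun q => q ≠ 2), (((q : ℝ) - 1) / ((q : ℝ) - 2))

/-- counting x < N with x+t coprime to N for all t in T -/
def cnt (T : Finset ℕ) (N : ℕ) : ℕ :=
  ((Finset.range N).filter (fun x => ∀ t ∈ T, Nat.Coprime (x + t) N)).card

def cntZ (T : Finset ℕ) (N : ℕ) [NeZero N] : ℕ :=
  (Finset.univ.filter (fun x : ZMod N => ∀ t ∈ T, IsUnit (x + (t : ZMod N)))).card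

lemma cnt_eq_cntZ (T : Finset ℕ) (N : ℕ) [NeZero N] : cnt T N = cntZ T N := by
  classical
  unfold cnt cntZ
  refine Finset.card_bij (fun (x : ℕ) _ => (x : ZMod N)) ?_ ?_ ?_
  · intro x hx
    simp only [mem_filter, mem_range] at hx ⊢
    refine ⟨mem_univ _, fun t ht => ?_⟩
    have := hx.2 t ht
    rw [← Nat.cast_add]
    exact (ZMod.isUnit_iff_coprime _ _).mpr this
  · intro a ha b hb h
    simp only [mem_filter, mem_range] at ha hb
    have := (ZMod.natCast_eq_natCast_iff' a b N).mp h
    rwa [Nat.mod_eq_of_lt ha.1, Nat.mod_eq_of_lt hb.1] at this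
  · intro z hz
    refine ⟨z.val, ?_, by simp [ZMod.natCast_val, ZMod.cast_id]⟩
    simp only [mem_filter, mem_range] at hz ⊢
    refine ⟨ZMod.val_lt z, fun t ht => ?_⟩
    have := hz.2 t ht
    rw [← ZMod.isUnit_iff_coprime, Nat.cast_add, ZMod.natCast_val, ZMod.cast_id]
    exact this

lemma isUnit_prod' {M N : Type*} [Monoid M] [Monoid N] (x : M × N) :
    IsUnit x ↔ IsUnit x.1 ∧ IsUnit x.2 := by
  constructor
  · intro hx
    exact ⟨hx.map (MonoidHom.fst M N), hx.map (MonoidHom.snd M N)⟩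
  · rintro ⟨⟨u, hu⟩, ⟨v, hv⟩⟩
    refine ⟨⟨(u, v), ((u⁻¹ : _), (v⁻¹ : _)), ?_, ?_⟩, ?_⟩
    · ext <;> simp
    · ext <;> simp
    · simp only [Units.val_mk]
      exact Prod.ext hu hv

lemma cntZ_mul (T : Finset ℕ) (m n : ℕ) [NeZero m] [NeZero n] (h : Nat.Coprime m n) :
    cntZ T (m * n) = cntZ T m * cntZ T n := by
  classical
  haveI : NeZero (m * n) := ⟨mul_ne_zero (NeZero.ne m) (NeZero.ne n)⟩
  have key : ∀ (x : ZMod (m*n)) (t : ℕ), IsUnit (x + (t : ZMod (m*n))) ↔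
      IsUnit ((ZMod.chineseRemainder h x).1 + (t : ZMod m)) ∧
      IsUnit ((ZMod.chineseRemainder h x).2 + (t : ZMod n)) := by
    intro x t
    have h1 : IsUnit (x + (t : ZMod (m*n))) ↔ IsUnit (ZMod.chineseRemainder h (x + t)) :=
      ⟨fun hu => hu.map (ZMod.chineseRemainder h).toRingHom,
       fun hu => by
         have := hu.map (ZMod.chineseRemainder h).symm.toRingHom
         simpa using this⟩
    rw [h1, map_add, map_natCast, isUnit_prod']
    simp [Prod.fst_add, Prod.snd_add, Prod.fst_natCast, Prod.snd_natCast]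
  unfold cntZ
  rw [← Finset.card_product]
  refine Finset.card_bij (fun (x : ZMod (m*n)) _ => ZMod.chineseRemainder h x) ?_ ?_ ?_
  · intro x hx
    simp only [mem_filter, mem_univ, true_and, mem_product] at hx ⊢
    exact ⟨fun t ht => ((key x t).mp (hx t ht)).1, fun t ht => ((key x t).mp (hx t ht)).2⟩
  · intro a _ b _ hab
    exact (ZMod.chineseRemainder h).injective hab
  · intro z hz
    simp only [mem_filter, mem_univ, true_and, mem_product] at hz
    refine ⟨(ZMod.chineseRemainder h).symm z, Finset.mem_filter.mpr ⟨mem_univ _, fun t ht => ?_⟩, by simp⟩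
    rw [key _ t, RingEquiv.apply_symm_apply]
    exact ⟨hz.1 t ht, hz.2 t ht⟩

lemma cntZ_prime (T : Finset ℕ) (q : ℕ) (hq : q.Prime) :
    haveI : NeZero q := ⟨hq.ne_zero⟩
    cntZ T q = q - (T.image (fun t : ℕ => (t : ZMod q))).card := by
  classical
  haveI : Fact q.Prime := ⟨hq⟩
  haveI : NeZero q := ⟨hq.ne_zero⟩
  unfold cntZ
  have key : ∀ x : ZMod q, (∀ t ∈ T, IsUnit (x + (t : ZMod q))) ↔
      x ∉ T.image (fun t : ℕ => -(t : ZMod q)) := by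
    intro x
    constructor
    · intro hx hmem
      obtain ⟨t, ht, h⟩ := Finset.mem_image.mp hmem
      have := hx t ht
      rw [← h] at this
      simp at this
    · intro hx t ht
      rw [isUnit_iff_ne_zero]
      intro h0
      exact hx (Finset.mem_image.mpr ⟨t, ht, by linear_combination -h0⟩)
  rw [Finset.filter_congr (fun x _ => by rw [key x])]
  rw [Finset.filter_not, Finset.filter_mem_eq_inter, Finset.univ_inter,
    Finset.card_sdiff_of_subset (Finset.subset_univ _)]
  congr 1
  · simp [ZMod.card]
  · have himg : T.image (fun t : ℕ => -(t : ZMod q))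
        = (T.image (fun t : ℕ => (t : ZMod q))).image (fun z => -z) := by
      rw [Finset.image_image]
      rfl
    rw [himg, Finset.card_image_of_injective _ neg_injective]

lemma cnt_one (T : Finset ℕ) : cnt T 1 = 1 := by
  unfold cnt
  rw [Finset.range_one]
  simp [Nat.coprime_one_right]

lemma cnt_prod (T : Finset ℕ) (P : Finset ℕ) (hP : ∀ q ∈ P, q.Prime) :
    cnt T (∏ q ∈ P, q) = ∏ q ∈ P, (q - (T.image (fun t : ℕ => (t : ZMod q))).card) := by
  classical
  induction P using Finset.cons_induction with
  | empty => simpa using cnt_one T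
  | cons q P hqP ih =>
    rw [Finset.prod_cons, Finset.prod_cons]
    have hq : q.Prime := hP q (Finset.mem_cons_self q P)
    have hP' : ∀ r ∈ P, r.Prime := fun r hr => hP r (Finset.mem_cons.mpr (Or.inr hr))
    have hcop : Nat.Coprime q (∏ r ∈ P, r) := by
      refine Nat.Coprime.prod_right fun r hr => ?_
      exact (Nat.coprime_primes hq (hP' r hr)).mpr (fun h => hqP (h ▸ hr))
    haveI : NeZero q := ⟨hq.ne_zero⟩
    haveI : NeZero (∏ r ∈ P, r) :=
      ⟨Nat.pos_iff_ne_zero.mp (Finset.prod_pos fun r hr => (hP' r hr).pos)⟩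
    rw [cnt_eq_cntZ, cntZ_mul T q _ hcop, ← cnt_eq_cntZ, ← cnt_eq_cntZ, ih hP',
      cnt_eq_cntZ, cntZ_prime T q hq]

lemma pair_image_card (g q : ℕ) (hq : q.Prime) :
    ((({0, g} : Finset ℕ)).image (fun t : ℕ => (t : ZMod q))).card
      = if q ∣ g then 1 else 2 := by
  classical
  rw [Finset.image_insert, Finset.image_singleton]
  by_cases h : q ∣ g
  · rw [if_pos h]
    have : ((g : ZMod q)) = 0 := (ZMod.natCast_eq_zero_iff g q).mpr h
    simp [this]
  · rw [if_neg h]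
    have : ((g : ZMod q)) ≠ 0 := fun hc => h ((ZMod.natCast_eq_zero_iff g q).mp hc)
    rw [Finset.card_insert_of_notMem (by simpa using fun hc => this hc.symm)]
    simp

lemma triple_image_card (g d q : ℕ) (hq : q.Prime) (hd0 : 0 < d) (hdg : d < g) (hgq : g < q) :
    ((({0, d, g} : Finset ℕ)).image (fun t : ℕ => (t : ZMod q))).card = 3 := by
  classical
  haveI : NeZero q := ⟨hq.ne_zero⟩
  have hinj : ∀ a b : ℕ, a < q → b < q → (a : ZMod q) = (b : ZMod q) → a = b := by
    intro a b ha hb hab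
    have := (ZMod.natCast_eq_natCast_iff' a b q).mp hab
    rwa [Nat.mod_eq_of_lt ha, Nat.mod_eq_of_lt hb] at this
  rw [Finset.image_insert, Finset.image_insert, Finset.image_singleton]
  rw [Finset.card_insert_of_notMem, Finset.card_insert_of_notMem, Finset.card_singleton]
  · simp only [Finset.mem_singleton]
    intro hc
    exact absurd (hinj d g (lt_trans hdg hgq) hgq hc) (ne_of_lt hdg)
  · simp only [Finset.mem_insert, Finset.mem_singleton, Nat.cast_zero]
    push_neg
    constructor
    · intro hc
      exact absurd (hinj 0 d (hq.pos) (lt_trans hdg hgq) (by exact_mod_cast hc)) (ne_of_lt hd0)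
    · intro hc
      exact absurd (hinj 0 g (hq.pos) hgq (by exact_mod_cast hc)) (Nat.ne_of_lt (lt_trans hd0 hdg))

lemma image_card_pos (T : Finset ℕ) (hT : T.Nonempty) (q : ℕ) :
    0 < (T.image (fun t : ℕ => (t : ZMod q))).card :=
  Finset.card_pos.mpr (hT.image _)

lemma gapPop_le_cnt (g N : ℕ) :
    gapPopulation g N ≤ cnt ({0, g} : Finset ℕ) N := by
  classical
  apply Finset.card_le_card
  intro x hx
  simp only [gapPopulation, Finset.mem_filter, Finset.mem_range] at hx
  simp only [cnt, Finset.mem_filter, Finset.mem_range]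
  refine ⟨hx.1, fun t ht => ?_⟩
  rcases Finset.mem_insert.mp ht with rfl | ht
  · simpa using hx.2.1
  · rw [Finset.mem_singleton] at ht
    subst ht
    exact hx.2.2.1

lemma cnt_le_gapPop_add (g N : ℕ) :
    cnt ({0, g} : Finset ℕ) N ≤
      gapPopulation g N + ∑ d ∈ Finset.Ioo 0 g, cnt ({0, d, g} : Finset ℕ) N := by
  classical
  have hsub : (Finset.range N).filter (fun x => ∀ t ∈ ({0, g} : Finset ℕ), Nat.Coprime (x + t) N) ⊆
      ((Finset.range N).filter
        (fun x => Nat.Coprime x N ∧ Nat.Coprime (x + g) N ∧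
          ∀ y ∈ Finset.Ioo x (x + g), ¬ Nat.Coprime y N)) ∪
      (Finset.Ioo 0 g).biUnion (fun d =>
        (Finset.range N).filter (fun x => ∀ t ∈ ({0, d, g} : Finset ℕ), Nat.Coprime (x + t) N)) := by
    intro x hx
    simp only [Finset.mem_filter, Finset.mem_range] at hx
    have hx0 : Nat.Coprime x N := by simpa using hx.2 0 (by simp)
    have hxg : Nat.Coprime (x + g) N := hx.2 g (by simp)
    by_cases hmid : ∀ y ∈ Finset.Ioo x (x + g), ¬ Nat.Coprime y N
    · exact Finset.mem_union_left _ (Finset.mem_filter.mpr ⟨Finset.mem_range.mpr hx.1, hx0, hxg, hmid⟩)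
    · push_neg at hmid
      obtain ⟨y, hy, hyc⟩ := hmid
      rw [Finset.mem_Ioo] at hy
      refine Finset.mem_union_right _ (Finset.mem_biUnion.mpr ⟨y - x, ?_, ?_⟩)
      · rw [Finset.mem_Ioo]
        omega
      · refine Finset.mem_filter.mpr ⟨Finset.mem_range.mpr hx.1, fun t ht => ?_⟩
        simp only [Finset.mem_insert, Finset.mem_singleton] at ht
        rcases ht with rfl | rfl | rfl
        · simpa using hx0
        · have : x + (y - x) = y := by omega
          rw [this]; exact hyc
        · exact hxg
  refine le_trans (le_trans (Finset.card_le_card hsub) (Finset.card_union_le _ _)) ?_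
  unfold gapPopulation cnt
  gcongr
  exact Finset.card_biUnion_le

lemma cnt_primorial (T : Finset ℕ) (p : ℕ) :
    cnt T (primorial' p) = ∏ q ∈ (Finset.range (p+1)).filter Nat.Prime,
      (q - (T.image (fun t : ℕ => (t : ZMod q))).card) :=
  cnt_prod T _ (fun q hq => (Finset.mem_filter.mp hq).2)

lemma cQ_le (T : Finset ℕ) (q : ℕ) (hq : q.Prime) :
    (T.image (fun t : ℕ => (t : ZMod q))).card ≤ q := by
  haveI : NeZero q := ⟨hq.ne_zero⟩
  calc (T.image (fun t : ℕ => (t : ZMod q))).card ≤ Finset.univ.card := Finset.card_le_univ _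
    _ = q := by rw [Finset.card_univ, ZMod.card]

lemma cnt_primorial_real (T : Finset ℕ) (p : ℕ) :
    (cnt T (primorial' p) : ℝ) = ∏ q ∈ (Finset.range (p+1)).filter Nat.Prime,
      ((q : ℝ) - (T.image (fun t : ℕ => (t : ZMod q))).card) := by
  rw [cnt_primorial, Nat.cast_prod]
  refine Finset.prod_congr rfl fun q hq => ?_
  have hq' : q.Prime := (Finset.mem_filter.mp hq).2
  rw [Nat.cast_sub (cQ_le T q hq')]

lemma primes_range_eq (p : ℕ) (hp : 2 ≤ p) :
    (Finset.range (p+1)).filter Nat.Prime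
      = insert 2 ((Finset.Icc 3 p).filter Nat.Prime) := by
  ext q
  simp only [Finset.mem_filter, Finset.mem_range, Finset.mem_insert, Finset.mem_Icc]
  constructor
  · rintro ⟨hlt, hq⟩
    by_cases h2 : q = 2
    · exact Or.inl h2
    · exact Or.inr ⟨⟨by have := hq.two_le; omega, by omega⟩, hq⟩
  · rintro (rfl | ⟨⟨h3, hle⟩, hq⟩)
    · exact ⟨by omega, Nat.prime_two⟩
    · exact ⟨by omega, hq⟩

lemma two_not_mem_Q (p : ℕ) : 2 ∉ (Finset.Icc 3 p).filter Nat.Prime := by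
  simp [Finset.mem_filter, Finset.mem_Icc]

lemma pair_formula (g p : ℕ) (hg : 0 < g) (hge : Even g) (hgp : g ≤ p) (hp2 : 2 ≤ p) :
    (cnt ({0, g} : Finset ℕ) (primorial' p) : ℝ)
      = W g * ∏ q ∈ (Finset.Icc 3 p).filter Nat.Prime, ((q : ℝ) - 2) := by
  classical
  rw [cnt_primorial_real, primes_range_eq p hp2, Finset.prod_insert (two_not_mem_Q p)]
  have h2 : ((({0, g} : Finset ℕ)).image (fun t : ℕ => (t : ZMod 2))).card = 1 := by
    rw [pair_image_card g 2 Nat.prime_two, if_pos hge.two_dvd]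
  rw [h2]
  have hmain : ∏ q ∈ (Finset.Icc 3 p).filter Nat.Prime,
      ((q : ℝ) - ((({0, g} : Finset ℕ)).image (fun t : ℕ => (t : ZMod q))).card)
      = ∏ q ∈ (Finset.Icc 3 p).filter Nat.Prime,
        ((if q ∣ g then ((q:ℝ)-1)/((q:ℝ)-2) else 1) * ((q:ℝ) - 2)) := by
    refine Finset.prod_congr rfl fun q hq => ?_
    simp only [Finset.mem_filter, Finset.mem_Icc] at hq
    have hq3 : 3 ≤ q := hq.1.1
    have hne : ((q:ℝ) - 2) ≠ 0 := by
      have : (3:ℝ) ≤ q := by exact_mod_cast hq3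
      linarith
    rw [pair_image_card g q hq.2]
    by_cases hdvd : q ∣ g
    · rw [if_pos hdvd, if_pos hdvd, div_mul_cancel₀ _ hne]
      norm_num
    · rw [if_neg hdvd, if_neg hdvd, one_mul]
      norm_num
  rw [hmain, Finset.prod_mul_distrib, ← Finset.prod_filter]
  have hset : ((Finset.Icc 3 p).filter Nat.Prime).filter (· ∣ g)
      = g.primeFactors.filter (fun q => q ≠ 2) := by
    ext q
    simp only [Finset.mem_filter, Finset.mem_Icc, Nat.mem_primeFactors]
    constructor
    · rintro ⟨⟨⟨h3, hle⟩, hq⟩, hdvd⟩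
      exact ⟨⟨hq, hdvd, hg.ne'⟩, by omega⟩
    · rintro ⟨⟨hq, hdvd, _⟩, hne2⟩
      have hq2 := hq.two_le
      have hle : q ≤ g := Nat.le_of_dvd hg hdvd
      exact ⟨⟨⟨by omega, by omega⟩, hq⟩, hdvd⟩
  rw [hset, W]
  norm_num

noncomputable def Kc (g : ℕ) : ℝ :=
  ∏ q ∈ (Finset.Icc 3 g).filter Nat.Prime, (((q:ℝ)-1)/((q:ℝ)-2))

noncomputable def eps (g p : ℕ) : ℝ :=
  ∏ q ∈ (Finset.Icc (g+1) p).filter Nat.Prime, (((q:ℝ)-3)/((q:ℝ)-2))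

lemma Kc_nonneg (g : ℕ) : 0 ≤ Kc g := by
  refine Finset.prod_nonneg fun q hq => ?_
  simp only [Finset.mem_filter, Finset.mem_Icc] at hq
  have : (3:ℝ) ≤ q := by exact_mod_cast hq.1.1
  have h2 : (0:ℝ) < (q:ℝ) - 2 := by linarith
  have h1 : (0:ℝ) ≤ (q:ℝ) - 1 := by linarith
  exact div_nonneg h1 h2.le

lemma eps_nonneg (g p : ℕ) : 0 ≤ eps g p := by
  refine Finset.prod_nonneg fun q hq => ?_
  simp only [Finset.mem_filter, Finset.mem_Icc] at hq
  have h2 : 2 ≤ q := hq.2.two_le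
  rcases Nat.lt_or_ge q 3 with h | h
  · have : q = 2 := by omega
    subst this
    norm_num
  · have h3 : (3:ℝ) ≤ q := by exact_mod_cast h
    have h2 : (0:ℝ) < (q:ℝ) - 2 := by linarith
    have h1 : (0:ℝ) ≤ (q:ℝ) - 3 := by linarith
    exact div_nonneg h1 h2.le

lemma triple_bound (g d p : ℕ) (hd0 : 0 < d) (hdg : d < g) (hgp : g ≤ p) (hp2 : 2 ≤ p) :
    (cnt ({0, d, g} : Finset ℕ) (primorial' p) : ℝ)
      ≤ (Kc g * eps g p) * ∏ q ∈ (Finset.Icc 3 p).filter Nat.Prime, ((q : ℝ) - 2) := by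
  classical
  set T : Finset ℕ := {0, d, g} with hT
  set c : ℕ → ℕ := fun q => (T.image (fun t : ℕ => (t : ZMod q))).card with hc
  have hTne : T.Nonempty := ⟨0, by simp [hT]⟩
  set A := (Finset.Icc 3 g).filter Nat.Prime with hA
  set B := (Finset.Icc (g+1) p).filter Nat.Prime with hB
  have hdisj : Disjoint A B := by
    rw [Finset.disjoint_left]
    intro q hqA hqB
    simp only [hA, hB, Finset.mem_filter, Finset.mem_Icc] at hqA hqB
    omega
  have hunion : (Finset.Icc 3 p).filter Nat.Prime = A ∪ B := by
    rw [hA, hB, ← Finset.filter_union]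
    congr 1
    ext x
    simp only [Finset.mem_union, Finset.mem_Icc]
    omega
  -- nonnegativity facts
  have hsub : ∀ q : ℕ, q.Prime → (0:ℝ) ≤ (q:ℝ) - c q := by
    intro q hq
    have := cQ_le T q hq
    have : (c q : ℝ) ≤ q := by exact_mod_cast this
    linarith
  have hq2pos : ∀ q ∈ A ∪ B, (0:ℝ) < (q:ℝ) - 2 := by
    intro q hq
    simp only [hA, hB, Finset.mem_union, Finset.mem_filter, Finset.mem_Icc] at hq
    have h3 : 3 ≤ q := by rcases hq with ⟨⟨h,_⟩,_⟩ | ⟨⟨h,_⟩,hp⟩ <;> [omega; skip]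
                          · have := hp.two_le; omega
    have : (3:ℝ) ≤ q := by exact_mod_cast h3
    linarith
  -- the formula
  have hform : (cnt T (primorial' p) : ℝ)
      = ((2:ℝ) - c 2) * ((∏ q ∈ A, ((q:ℝ) - c q)) * ∏ q ∈ B, ((q:ℝ) - c q)) := by
    rw [cnt_primorial_real, primes_range_eq p hp2, Finset.prod_insert (two_not_mem_Q p),
      hunion, Finset.prod_union hdisj]
    norm_num
    rfl
  -- bound at 2
  have h2le : ((2:ℝ) - c 2) ≤ 1 := by
    have h1 : 1 ≤ c 2 := image_card_pos T hTne 2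
    have : (1:ℝ) ≤ c 2 := by exact_mod_cast h1
    linarith
  have h2nn : (0:ℝ) ≤ (2:ℝ) - c 2 := hsub 2 Nat.prime_two
  -- bound on A
  have hAle : ∏ q ∈ A, ((q:ℝ) - c q) ≤ Kc g * ∏ q ∈ A, ((q:ℝ) - 2) := by
    rw [Kc, ← hA, ← Finset.prod_mul_distrib]
    refine Finset.prod_le_prod (fun q hq => hsub q ?_) (fun q hq => ?_)
    · exact (Finset.mem_filter.mp hq).2
    · have hq' := Finset.mem_filter.mp hq
      have hqp := hq'.2
      have hq3 : 3 ≤ q := (Finset.mem_Icc.mp hq'.1).1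
      have hq3' : (3:ℝ) ≤ q := by exact_mod_cast hq3
      have hne : ((q:ℝ) - 2) ≠ 0 := by linarith
      rw [div_mul_cancel₀ _ hne]
      have h1 : 1 ≤ c q := image_card_pos T hTne q
      have : (1:ℝ) ≤ c q := by exact_mod_cast h1
      linarith
  -- equality on B
  have hBeq : ∏ q ∈ B, ((q:ℝ) - c q) = eps g p * ∏ q ∈ B, ((q:ℝ) - 2) := by
    rw [eps, ← hB, ← Finset.prod_mul_distrib]
    refine Finset.prod_congr rfl fun q hq => ?_
    have hq' := Finset.mem_filter.mp hq
    have hqp := hq'.2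
    have hgq : g < q := by have := (Finset.mem_Icc.mp hq'.1).1; omega
    have hc3 : c q = 3 := triple_image_card g d q hqp hd0 hdg hgq
    have hq3 : 3 ≤ q := by have := hqp.two_le; omega
    have hq3' : (3:ℝ) ≤ q := by exact_mod_cast hq3
    have hne : ((q:ℝ) - 2) ≠ 0 := by linarith
    rw [hc3, div_mul_cancel₀ _ hne]
    norm_num
  -- combine
  have hAnn : (0:ℝ) ≤ ∏ q ∈ A, ((q:ℝ) - c q) :=
    Finset.prod_nonneg fun q hq => hsub q (Finset.mem_filter.mp hq).2
  have hDA : (0:ℝ) ≤ ∏ q ∈ A, ((q:ℝ) - 2) :=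
    Finset.prod_nonneg fun q hq => (hq2pos q (Finset.mem_union_left _ hq)).le
  have hDB : (0:ℝ) ≤ ∏ q ∈ B, ((q:ℝ) - 2) :=
    Finset.prod_nonneg fun q hq => (hq2pos q (Finset.mem_union_right _ hq)).le
  have hBnn : (0:ℝ) ≤ eps g p * ∏ q ∈ B, ((q:ℝ) - 2) :=
    mul_nonneg (eps_nonneg g p) hDB
  rw [hform, hunion, Finset.prod_union hdisj, hBeq]
  calc ((2:ℝ) - c 2) * ((∏ q ∈ A, ((q:ℝ) - c q)) * (eps g p * ∏ q ∈ B, ((q:ℝ) - 2)))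
      ≤ 1 * ((Kc g * ∏ q ∈ A, ((q:ℝ) - 2)) * (eps g p * ∏ q ∈ B, ((q:ℝ) - 2))) := by
        apply mul_le_mul h2le _ (mul_nonneg hAnn hBnn) zero_le_one
        exact mul_le_mul_of_nonneg_right hAle hBnn
    _ = Kc g * eps g p * ((∏ q ∈ A, ((q:ℝ) - 2)) * ∏ q ∈ B, ((q:ℝ) - 2)) := by ring

lemma eps_tendsto_zero (g : ℕ) : Tendsto (fun p => eps g p) atTop (nhds 0) := by
  classical
  set ind : ℕ → ℝ := Set.indicator {p | p.Prime} (fun n : ℕ => (1:ℝ) / n) with hind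
  have hnn : ∀ n, 0 ≤ ind n := by
    intro n
    rw [hind]
    by_cases h : n ∈ {p | p.Prime}
    · rw [Set.indicator_of_mem h]
      positivity
    · rw [Set.indicator_of_notMem h]
  have hdiv : Tendsto (fun n => ∑ k ∈ Finset.range n, ind k) atTop atTop :=
    (not_summable_iff_tendsto_nat_atTop_of_nonneg hnn).mp not_summable_one_div_on_primes
  -- the sum over primes in Icc (g+1) p of 1/q
  set S : ℕ → ℝ := fun p => ∑ q ∈ (Finset.Icc (g+1) p).filter Nat.Prime, (1:ℝ)/q with hS
  have hSeq : ∀ p, g ≤ p → S p = (∑ k ∈ Finset.range (p+1), ind k) - ∑ k ∈ Finset.range (g+1), ind k := by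
    intro p hp
    simp only [hS]
    have h1 : (Finset.Icc (g+1) p).filter Nat.Prime = (Finset.Ico (g+1) (p+1)).filter Nat.Prime := by
      rw [Finset.Ico_add_one_right_eq_Icc]
    rw [h1, Finset.sum_filter]
    have h2 : ∀ k ∈ Finset.Ico (g+1) (p+1), (if k.Prime then (1:ℝ)/k else 0) = ind k := by
      intro k _
      by_cases h : k.Prime
      · rw [if_pos h]
        exact (Set.indicator_of_mem (show k ∈ {p | Nat.Prime p} from h) (fun n : ℕ => (1:ℝ)/n)).symm
      · rw [if_neg h]
        exact (Set.indicator_of_notMem (show k ∉ {p | Nat.Prime p} from h) (fun n : ℕ => (1:ℝ)/n)).symm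
    rw [Finset.sum_congr rfl h2, Finset.sum_Ico_eq_sub _ (by omega)]
  have hStend : Tendsto S atTop atTop := by
    have h1 : Tendsto (fun p : ℕ => (∑ k ∈ Finset.range (p+1), ind k)
        - ∑ k ∈ Finset.range (g+1), ind k) atTop atTop := by
      apply tendsto_atTop_add_const_right
      exact hdiv.comp (tendsto_add_atTop_nat 1)
    refine h1.congr' ?_
    filter_upwards [eventually_ge_atTop g] with p hp
    exact (hSeq p hp).symm
  -- bound eps by exp (-S)
  have hbound : ∀ p, eps g p ≤ Real.exp (-(S p)) := by
    intro p
    rw [hS, eps]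
    have : Real.exp (-∑ q ∈ (Finset.Icc (g+1) p).filter Nat.Prime, (1:ℝ)/q)
        = ∏ q ∈ (Finset.Icc (g+1) p).filter Nat.Prime, Real.exp (-(1/(q:ℝ))) := by
      rw [← Real.exp_sum, ← Finset.sum_neg_distrib]
    rw [this]
    refine Finset.prod_le_prod (fun q hq => ?_) (fun q hq => ?_)
    · simp only [Finset.mem_filter, Finset.mem_Icc] at hq
      have h2 : 2 ≤ q := hq.2.two_le
      rcases Nat.lt_or_ge q 3 with h | h
      · have : q = 2 := by omega
        subst this; norm_num
      · have h3 : (3:ℝ) ≤ q := by exact_mod_cast h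
        have h2' : (0:ℝ) < (q:ℝ) - 2 := by linarith
        have h1' : (0:ℝ) ≤ (q:ℝ) - 3 := by linarith
        exact div_nonneg h1' h2'.le
    · simp only [Finset.mem_filter, Finset.mem_Icc] at hq
      have h2 : 2 ≤ q := hq.2.two_le
      rcases Nat.lt_or_ge q 3 with h | h
      · have : q = 2 := by omega
        subst this
        norm_num
        positivity
      · have h3 : (3:ℝ) ≤ q := by exact_mod_cast h
        have h2' : (0:ℝ) < (q:ℝ) - 2 := by linarith
        have hqpos : (0:ℝ) < q := by linarith
        -- (q-3)/(q-2) = 1 - 1/(q-2) ≤ exp(-(1/(q-2))) ≤ exp(-(1/q))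
        have e1 : ((q:ℝ)-3)/((q:ℝ)-2) = 1 - 1/((q:ℝ)-2) := by
          field_simp
          ring
        have e2 : 1 - 1/((q:ℝ)-2) ≤ Real.exp (-(1/((q:ℝ)-2))) := by
          have := Real.add_one_le_exp (-(1/((q:ℝ)-2)))
          linarith
        have e3 : Real.exp (-(1/((q:ℝ)-2))) ≤ Real.exp (-(1/(q:ℝ))) := by
          apply Real.exp_le_exp.mpr
          have : 1/(q:ℝ) ≤ 1/((q:ℝ)-2) := by
            apply one_div_le_one_div_of_le h2'
            linarith
          linarith
        rw [e1]
        exact e2.trans e3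
  have hexp : Tendsto (fun p => Real.exp (-(S p))) atTop (nhds 0) :=
    Real.tendsto_exp_atBot.comp (tendsto_neg_atBot_iff.mpr hStend)
  exact squeeze_zero (fun p => eps_nonneg g p) hbound hexp

/-- For a fixed positive even gap `g`, as the prime `p` tends to infinity, the relative
population `w_{g,1}(p#)` converges to the asymptotic value `W(g)`. -/
theorem relPopulation_tendsto_W (g : ℕ) (hg : 0 < g) (hge : Even g) :
    Tendsto (fun p => relPopulation g p)
      (atTop ⊓ Filter.principal {p : ℕ | p.Prime}) (nhds (W g)) := by
  classical
  have hatTop : Tendsto (fun p => relPopulation g p) atTop (nhds (W g)) := by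
    have hDpos : ∀ p : ℕ, (0:ℝ) < ∏ q ∈ (Finset.Icc 3 p).filter Nat.Prime, ((q:ℝ) - 2) := by
      intro p
      refine Finset.prod_pos fun q hq => ?_
      simp only [Finset.mem_filter, Finset.mem_Icc] at hq
      have : (3:ℝ) ≤ q := by exact_mod_cast hq.1.1
      linarith
    have hupper : ∀ p : ℕ, g ≤ p → 2 ≤ p → relPopulation g p ≤ W g := by
      intro p h1 h2
      rw [relPopulation, div_le_iff₀ (hDpos p)]
      calc (gapPopulation g (primorial' p) : ℝ)
          ≤ (cnt ({0, g} : Finset ℕ) (primorial' p) : ℝ) := by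
            exact_mod_cast gapPop_le_cnt g (primorial' p)
        _ = W g * ∏ q ∈ (Finset.Icc 3 p).filter Nat.Prime, ((q:ℝ) - 2) :=
            pair_formula g p hg hge h1 h2
    have hlower : ∀ p : ℕ, g ≤ p → 2 ≤ p →
        W g - (g:ℝ) * (Kc g * eps g p) ≤ relPopulation g p := by
      intro p h1 h2
      rw [relPopulation, le_div_iff₀ (hDpos p)]
      have hsum : (∑ d ∈ Finset.Ioo 0 g, (cnt ({0, d, g} : Finset ℕ) (primorial' p) : ℝ))
          ≤ (g:ℝ) * ((Kc g * eps g p) * ∏ q ∈ (Finset.Icc 3 p).filter Nat.Prime, ((q:ℝ) - 2)) := by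
        calc (∑ d ∈ Finset.Ioo 0 g, (cnt ({0, d, g} : Finset ℕ) (primorial' p) : ℝ))
            ≤ ∑ d ∈ Finset.Ioo 0 g,
                ((Kc g * eps g p) * ∏ q ∈ (Finset.Icc 3 p).filter Nat.Prime, ((q:ℝ) - 2)) := by
              refine Finset.sum_le_sum fun d hd => ?_
              rw [Finset.mem_Ioo] at hd
              exact triple_bound g d p hd.1 hd.2 h1 h2
          _ = ((Finset.Ioo 0 g).card : ℝ) *
                ((Kc g * eps g p) * ∏ q ∈ (Finset.Icc 3 p).filter Nat.Prime, ((q:ℝ) - 2)) := by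
              rw [Finset.sum_const, nsmul_eq_mul]
          _ ≤ (g:ℝ) * ((Kc g * eps g p) * ∏ q ∈ (Finset.Icc 3 p).filter Nat.Prime, ((q:ℝ) - 2)) := by
              have hcard : ((Finset.Ioo 0 g).card : ℝ) ≤ (g:ℝ) := by
                rw [Nat.card_Ioo]
                exact_mod_cast Nat.sub_le g 1
              have hnn : (0:ℝ) ≤ (Kc g * eps g p) *
                  ∏ q ∈ (Finset.Icc 3 p).filter Nat.Prime, ((q:ℝ) - 2) :=
                mul_nonneg (mul_nonneg (Kc_nonneg g) (eps_nonneg g p)) (hDpos p).le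
              exact mul_le_mul_of_nonneg_right hcard hnn
      have hkey : (cnt ({0, g} : Finset ℕ) (primorial' p) : ℝ)
          ≤ (gapPopulation g (primorial' p) : ℝ)
            + ∑ d ∈ Finset.Ioo 0 g, (cnt ({0, d, g} : Finset ℕ) (primorial' p) : ℝ) := by
        exact_mod_cast cnt_le_gapPop_add g (primorial' p)
      rw [pair_formula g p hg hge h1 h2] at hkey
      nlinarith [hsum, hkey]
    have hlow : Tendsto (fun p => W g - (g:ℝ) * (Kc g * eps g p)) atTop (nhds (W g)) := by
      have h0 : Tendsto (fun p => (g:ℝ) * (Kc g * eps g p)) atTop (nhds 0) := by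
        have := (eps_tendsto_zero g).const_mul ((g:ℝ) * Kc g)
        simpa [mul_assoc] using this
      simpa using tendsto_const_nhds.sub h0
    refine tendsto_of_tendsto_of_tendsto_of_le_of_le' hlow tendsto_const_nhds ?_ ?_
    · filter_upwards [eventually_ge_atTop g, eventually_ge_atTop 2] with p h1 h2
      exact hlower p h1 h2
    · filter_upwards [eventually_ge_atTop g, eventually_ge_atTop 2] with p h1 h2
      exact hupper p h1 h2
  exact hatTop.mono_left inf_le_left
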